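/- Fix m ≥ 1, α ∈ [0,1], and fixed (non-random) values p_1,...,p_{m−1} ∈ [0,1]. Let p_m ~ Uniform{1/L, 2/L, ..., (L−1)/L, 1}, let R_α := argmax_{k ∈ {0,...,m}} (αk/m − p_(k)) computed from all m values (p_(0) := 0), and let rank(p_m) := #{i : p_i ≤ p_m}, with ties among equal values broken uniformly at random. Then there exist a constant C and a threshold L_0 (depending on m, α, and the values p_1,...,p_{m−1}) such that for all L ≥ L_0, P(rank(p_m) = R_α) ≤ α/m + C·m/L; i.e., P(rank(p_m) = R_α) ≤ α/m + O(m/L) as L → ∞. -/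

import Mathlib

/-!
Write `v_ℓ` for the p-values with `p_m = ℓ/L`, and `R_ℓ`, `M_ℓ` for the number of rejections and
the maximal support-line objective at `v_ℓ`. Raising `p_m` raises every order statistic, so `M_ℓ`
is nonincreasing; changing a single p-value shifts order statistics by at most one rank, so
between two grid points where `p_m` is the boundary rejection `R_ℓ` does not decrease and `M_ℓ`
drops by at most `α/m`. Hence the potential `R_ℓ - L M_ℓ` increases by at least `1` between any
two such points (either `R` jumps, or `R` is constant and `M` drops by exactly the grid step) and
by at most `m - 1 + αL/m` overall: there are at most `αL/m + m` such points, each of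
probability `1/L`.
-/

open MeasureTheory Filter Set

/-- The `k`-th order statistic of the values `v 0, ..., v (m-1)`. -/
noncomputable def orderStat {m : ℕ} (v : Fin m → ℝ) (k : ℕ) : ℝ :=
  if k = 0 then 0
  else sInf {x : ℝ | k ≤ (Finset.univ.filter (fun i => v i ≤ x)).card}

/-- The support-line objective `k ↦ α k / m − p_(k)`. -/
noncomputable def slObj (α : ℝ) {m : ℕ} (v : Fin m → ℝ) (k : ℕ) : ℝ :=
  α * (k : ℝ) / (m : ℝ) - orderStat v k

/-- The number of rejections `R_α` of the support-line procedure at level `α`. -/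
noncomputable def slR (α : ℝ) {m : ℕ} (v : Fin m → ℝ) : ℕ :=
  sSup {k : ℕ | k ≤ m ∧ ∀ j ≤ m, slObj α v j ≤ slObj α v k}

/-- The rejection threshold `τ̂_α = p_(R_α)` of the support-line procedure. -/
noncomputable def slTau (α : ℝ) {m : ℕ} (v : Fin m → ℝ) : ℝ :=
  orderStat v (slR α v)

open Finset in
theorem Finset.card_le_sub_add_one_of_forall_add_one_le {ι : Type*} [LinearOrder ι]
    {s : Finset ι} {f : ι → ℝ} {a b : ℝ} (hs : s.Nonempty)
    (hf : ∀ x ∈ s, ∀ y ∈ s, x < y → f x + 1 ≤ f y)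
    (ha : ∀ x ∈ s, a ≤ f x) (hb : ∀ x ∈ s, f x ≤ b) : (#s : ℝ) ≤ b - a + 1 := by
  classical
  induction s using Finset.induction_on_max generalizing b with
  | empty => exact absurd hs not_nonempty_empty
  | insert x s hlt ih =>
    have hx := mem_insert_self x s
    rw [card_insert_of_notMem fun h => (hlt x h).false, Nat.cast_succ]
    rcases s.eq_empty_or_nonempty with rfl | hne
    · rw [card_empty, Nat.cast_zero]
      linarith [ha x hx, hb x hx]
    · have := ih hne (b := f x - 1)
        (fun y hy z hz => hf y (mem_insert_of_mem hy) z (mem_insert_of_mem hz))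
        (fun y hy => ha y (mem_insert_of_mem hy))
        (fun y hy => by linarith [hf y (mem_insert_of_mem hy) x hx (hlt y hy)])
      linarith [hb x hx]

open Finset in
theorem Finset.card_le_add_one_of_forall_add_one_le {ι : Type*} [LinearOrder ι]
    {s : Finset ι} {f : ι → ℝ} {D : ℝ} (hD : 0 ≤ D)
    (hf : ∀ x ∈ s, ∀ y ∈ s, x < y → f x + 1 ≤ f y ∧ f y ≤ f x + D) : (#s : ℝ) ≤ D + 1 := by
  rcases s.eq_empty_or_nonempty with rfl | hs
  · rw [card_empty, Nat.cast_zero]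
    linarith
  have hmin := s.min'_mem hs
  have hmax := s.max'_mem hs
  have hlo : ∀ x ∈ s, f (s.min' hs) ≤ f x := fun x hx =>
    (s.min'_le x hx).eq_or_lt.elim (fun h => h ▸ le_rfl)
      fun h => by linarith [(hf _ hmin x hx h).1]
  have hhi : ∀ x ∈ s, f x ≤ f (s.max' hs) := fun x hx =>
    (s.le_max' x hx).eq_or_lt.elim (fun h => h ▸ le_rfl)
      fun h => by linarith [(hf x hx _ hmax h).1]
  have hspan : f (s.max' hs) ≤ f (s.min' hs) + D :=
    (s.min'_le _ hmax).eq_or_lt.elim (fun h => by rw [h]; linarith)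
      fun h => (hf _ hmin _ hmax h).2
  linarith [card_le_sub_add_one_of_forall_add_one_le hs (fun x hx y hy h => (hf x hx y hy h).1)
    hlo hhi]

section OrderStatistics

variable {m : ℕ} {v v' : Fin m → ℝ}

noncomputable def numLE (v : Fin m → ℝ) (x : ℝ) : ℕ := (Finset.univ.filter fun i => v i ≤ x).card

theorem numLE_mono (v : Fin m → ℝ) : Monotone (numLE v) := fun _ _ hxy =>
  Finset.card_le_card fun i hi =>
    Finset.mem_filter.2 ⟨Finset.mem_univ i, (Finset.mem_filter.1 hi).2.trans hxy⟩

theorem numLE_le_of_le (hle : v ≤ v') (x : ℝ) : numLE v' x ≤ numLE v x :=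
  Finset.card_le_card fun i hi =>
    Finset.mem_filter.2 ⟨Finset.mem_univ i, (hle i).trans (Finset.mem_filter.1 hi).2⟩

theorem numLE_le_add_one {i : Fin m} (hoff : ∀ j ≠ i, v j = v' j) (x : ℝ) :
    numLE v x ≤ numLE v' x + 1 := by
  classical
  refine (Finset.card_le_card fun j hj => ?_).trans (Finset.card_insert_le i _)
  rcases eq_or_ne j i with rfl | hji
  · exact Finset.mem_insert_self _ _
  · exact Finset.mem_insert_of_mem (Finset.mem_filter.2
      ⟨Finset.mem_univ j, hoff j hji ▸ (Finset.mem_filter.1 hj).2⟩)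

theorem isLeast_orderStat {k : ℕ} (h1 : 1 ≤ k) (hk : k ≤ m) :
    IsLeast {x | k ≤ numLE v x} (orderStat v k) := by
  have : Nonempty (Fin m) := ⟨⟨0, by omega⟩⟩
  obtain ⟨i₀, -, hi₀⟩ := Finset.exists_max_image Finset.univ v Finset.univ_nonempty
  have hT : (Finset.univ.filter fun i => k ≤ numLE v (v i)).Nonempty := by
    refine ⟨i₀, Finset.mem_filter.2 ⟨Finset.mem_univ _, ?_⟩⟩
    rwa [numLE, Finset.filter_true_of_mem fun j _ => hi₀ j (Finset.mem_univ j),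
      Finset.card_univ, Fintype.card_fin]
  obtain ⟨j, hjT, hj⟩ := Finset.exists_min_image _ v hT
  have hleast : IsLeast {x | k ≤ numLE v x} (v j) := by
    refine ⟨(Finset.mem_filter.1 hjT).2, fun x hx => ?_⟩
    obtain ⟨i, hix, hi⟩ := Finset.exists_max_image (Finset.univ.filter fun i => v i ≤ x) v
      (Finset.card_pos.1 (lt_of_lt_of_le h1 hx))
    have hiT : k ≤ numLE v (v i) := hx.trans (Finset.card_le_card fun i' hi' =>
      Finset.mem_filter.2 ⟨Finset.mem_univ _, hi i' hi'⟩)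
    exact (hj i (Finset.mem_filter.2 ⟨Finset.mem_univ _, hiT⟩)).trans (Finset.mem_filter.1 hix).2
  have hval : orderStat v k = v j := by
    rw [orderStat, if_neg (by omega)]
    exact hleast.csInf_eq
  exact hval ▸ hleast

theorem orderStat_le_iff {k : ℕ} (h1 : 1 ≤ k) (hk : k ≤ m) {x : ℝ} :
    orderStat v k ≤ x ↔ k ≤ numLE v x :=
  ⟨fun h => (isLeast_orderStat h1 hk).1.trans (numLE_mono v h),
    fun h => (isLeast_orderStat h1 hk).2 h⟩

theorem orderStat_mono (hle : v ≤ v') {k : ℕ} (hk : k ≤ m) :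
    orderStat v k ≤ orderStat v' k := by
  rcases Nat.eq_zero_or_pos k with rfl | h1
  · simp [orderStat]
  · exact (orderStat_le_iff h1 hk).2 <|
      ((orderStat_le_iff h1 hk).1 le_rfl).trans (numLE_le_of_le hle _)

theorem orderStat_pred_le {i : Fin m} (hoff : ∀ j ≠ i, v j = v' j) {k : ℕ} (h1 : 1 ≤ k)
    (hk : k ≤ m) (h0 : 0 ≤ orderStat v k) : orderStat v' (k - 1) ≤ orderStat v k := by
  rcases h1.eq_or_lt with rfl | h2
  · simpa [orderStat] using h0
  · refine (orderStat_le_iff (by omega) (by omega)).2 ?_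
    have := ((orderStat_le_iff h1 hk).1 le_rfl).trans (numLE_le_add_one hoff _)
    omega

end OrderStatistics

section SupportLine

variable (α : ℝ) {m : ℕ} {v v' : Fin m → ℝ}

noncomputable def slMax (v : Fin m → ℝ) : ℝ := slObj α v (slR α v)

theorem slR_mem (v : Fin m → ℝ) :
    slR α v ∈ {k : ℕ | k ≤ m ∧ ∀ j ≤ m, slObj α v j ≤ slObj α v k} := by
  obtain ⟨k, hk, hmax⟩ := Finset.exists_max_image (Finset.range (m + 1)) (slObj α v)
    Finset.nonempty_range_add_one
  exact Nat.sSup_mem ⟨k, Finset.mem_range_succ_iff.1 hk,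
    fun j hj => hmax j (Finset.mem_range_succ_iff.2 hj)⟩ ⟨m, fun _ hk => hk.1⟩

theorem slR_le (v : Fin m → ℝ) : slR α v ≤ m := (slR_mem α v).1

theorem slObj_le_slMax (v : Fin m → ℝ) {j : ℕ} (hj : j ≤ m) : slObj α v j ≤ slMax α v :=
  (slR_mem α v).2 j hj

theorem one_le_slR_of_pos (h : 0 < slTau α v) : 1 ≤ slR α v := by
  by_contra h'
  simp [slTau, show slR α v = 0 by omega, orderStat] at h

theorem slMax_antitone (hle : v ≤ v') : slMax α v' ≤ slMax α v :=
  calc slMax α v' ≤ slObj α v (slR α v') := by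
        simp only [slMax, slObj]
        linarith [orderStat_mono hle (slR_le α v')]
    _ ≤ slMax α v := slObj_le_slMax α v (slR_le α v')

theorem slMax_le_slMax_add {i : Fin m} (hoff : ∀ j ≠ i, v j = v' j) (h0 : 0 < slTau α v) :
    slMax α v ≤ slMax α v' + α / m := by
  have h1 := one_le_slR_of_pos α h0
  have hpred := orderStat_pred_le hoff h1 (slR_le α v) h0.le
  have hj := slObj_le_slMax α v' (j := slR α v - 1) (by have := slR_le α v; omega)
  simp only [slMax, slObj, Nat.cast_sub h1, Nat.cast_one] at hj ⊢
  have : α * ((slR α v : ℝ) - 1) / m = α * slR α v / m - α / m := by ring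
  linarith

theorem slR_le_slR {i : Fin m} (hoff : ∀ j ≠ i, v j = v' j) (h0 : 0 < slTau α v)
    (hlt : slTau α v < slTau α v') : slR α v ≤ slR α v' := by
  have h1 := one_le_slR_of_pos α h0
  have h1' := one_le_slR_of_pos α (h0.trans hlt)
  have hk : slR α v ≤ numLE v (slTau α v) := (orderStat_le_iff h1 (slR_le α v)).1 le_rfl
  have hk' : numLE v' (slTau α v) < slR α v' := by
    by_contra h
    exact hlt.not_ge ((orderStat_le_iff h1' (slR_le α v')).2 (not_lt.1 h))
  have := numLE_le_add_one hoff (slTau α v)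
  omega

noncomputable def slPotential (L : ℝ) (v : Fin m → ℝ) : ℝ := slR α v - L * slMax α v

theorem slPotential_spacing {i : Fin m} (hle : v ≤ v') (hoff : ∀ j ≠ i, v j = v' j)
    (h0 : 0 < slTau α v) (hlt : slTau α v < slTau α v') {L : ℝ} (hL : 0 ≤ L)
    (hgap : 1 ≤ L * (slTau α v' - slTau α v)) :
    slPotential α L v + 1 ≤ slPotential α L v' ∧
      slPotential α L v' ≤ slPotential α L v + (α * L / m + m - 1) := by
  have hR : (slR α v : ℝ) ≤ slR α v' := by exact_mod_cast slR_le_slR α hoff h0 hlt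
  have h1 : (1 : ℝ) ≤ slR α v := by exact_mod_cast one_le_slR_of_pos α h0
  have hRm : (slR α v' : ℝ) ≤ m := by exact_mod_cast slR_le α v'
  have hanti := mul_le_mul_of_nonneg_left (slMax_antitone α hle) hL
  have hdrop : L * slMax α v ≤ L * slMax α v' + α * L / m := by
    rw [mul_div_right_comm, mul_comm (α / m) L, ← mul_add]
    exact mul_le_mul_of_nonneg_left (slMax_le_slMax_add α hoff h0) hL
  simp only [slPotential]
  refine ⟨?_, by linarith⟩
  rcases hR.eq_or_lt with heq | hRlt
  · have : L * slMax α v = L * slMax α v' + L * (slTau α v' - slTau α v) := by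
      simp only [slMax, slObj, slTau, ← Nat.cast_inj.1 heq]
      ring
    linarith
  · have : (slR α v : ℝ) + 1 ≤ slR α v' := by exact_mod_cast Nat.cast_lt.1 hRlt
    linarith

end SupportLine

open Finset in
theorem card_le_of_slTau_eq_grid {α : ℝ} (hα : 0 ≤ α) {m : ℕ} (hm : 1 ≤ m) {L : ℕ} (hL : 0 < L)
    (v : ℕ → Fin m → ℝ) (hv : Monotone v) {i : Fin m}
    (hoff : ∀ ℓ ℓ', ∀ j ≠ i, v ℓ j = v ℓ' j) (E : Finset ℕ)
    (hE : ∀ ℓ ∈ E, 0 < ℓ ∧ slTau α (v ℓ) = ℓ / L) : (#E : ℝ) ≤ α * L / m + m := by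
  have hD : (0 : ℝ) ≤ α * L / m + m - 1 := by
    have : (1 : ℝ) ≤ m := by exact_mod_cast hm
    have : 0 ≤ α * L / m := by positivity
    linarith
  have := card_le_add_one_of_forall_add_one_le (f := fun ℓ => slPotential α L (v ℓ)) hD
    fun ℓ hℓ ℓ' hℓ' hlt => by
      obtain ⟨hpos, hτ⟩ := hE ℓ hℓ
      obtain ⟨-, hτ'⟩ := hE ℓ' hℓ'
      have hlt' : (ℓ : ℝ) < ℓ' := by exact_mod_cast hlt
      refine slPotential_spacing α (hv hlt.le) (hoff ℓ ℓ') (by rw [hτ]; positivity)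
        (by rw [hτ, hτ']; gcongr) (by positivity) ?_
      rw [hτ, hτ', ← sub_div, mul_div_cancel₀ _ (by positivity)]
      have : (ℓ : ℝ) + 1 ≤ ℓ' := by exact_mod_cast hlt
      linarith
  linarith

theorem Finset.sum_ite_one_div_le_card {ι : Type*} (s : Finset ι) (P : ι → Prop) [DecidablePred P]
    (n : ι → ℕ) : ∑ x ∈ s, (if P x then 1 / (n x : ℝ) else 0) ≤ (s.filter P).card := by
  rw [← sum_boole]
  gcongr with x
  split_ifs
  · exact (one_div (n x : ℝ)).symm ▸ Nat.cast_inv_le_one _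
  · rfl

/-- `p_m = ℓ/L` has probability `1/L`; on the event `τ̂_α = ℓ/L`, the uniform tie-break makes
`p_m` the boundary rejection with probability one over the number of p-values equal to `ℓ/L`. -/
theorem stmt12_general (m : ℕ) (hm : 1 ≤ m) (α : ℝ) (hα : α ∈ Icc (0 : ℝ) 1)
    (pfix : ℕ → ℝ) :
    ∃ C : ℝ, ∃ L0 : ℕ, 1 ≤ L0 ∧ ∀ L : ℕ, L0 ≤ L →
      (1 / (L : ℝ)) * ∑ ℓ ∈ Finset.Icc 1 L,
        (if 1 ≤ slR α (fun i : Fin m => if (i : ℕ) < m - 1 then pfix i else (ℓ : ℝ) / L)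
            ∧ slTau α (fun i : Fin m => if (i : ℕ) < m - 1 then pfix i else (ℓ : ℝ) / L)
              = (ℓ : ℝ) / L
          then 1 / (({i : Fin m |
              (if (i : ℕ) < m - 1 then pfix i else (ℓ : ℝ) / L) = (ℓ : ℝ) / L}.ncard : ℝ))
          else 0)
      ≤ α / m + C * m / L := by
  refine ⟨1, 1, le_rfl, fun L hL => ?_⟩
  have hL0 : (0 : ℝ) < L := by exact_mod_cast hL
  set v : ℕ → Fin m → ℝ := fun ℓ i => if (i : ℕ) < m - 1 then pfix i else (ℓ : ℝ) / L
  have hv : Monotone v := fun ℓ ℓ' h i => by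
    simp only [v]
    split_ifs
    · exact le_rfl
    · gcongr
  have hoff : ∀ ℓ ℓ', ∀ j ≠ (⟨m - 1, by omega⟩ : Fin m), v ℓ j = v ℓ' j := fun ℓ ℓ' j hj => by
    have : (j : ℕ) ≠ m - 1 := fun h => hj (Fin.ext h)
    have : (j : ℕ) < m - 1 := by omega
    simp only [v, if_pos this]
  have hcard := card_le_of_slTau_eq_grid hα.1 hm hL v hv hoff
    ((Finset.Icc 1 L).filter fun ℓ => 1 ≤ slR α (v ℓ) ∧ slTau α (v ℓ) = ℓ / L)
    fun ℓ hℓ => ⟨(Finset.mem_Icc.1 (Finset.mem_filter.1 hℓ).1).1, (Finset.mem_filter.1 hℓ).2.2⟩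
  calc _ ≤ 1 / (L : ℝ) * (α * L / m + m) :=
        mul_le_mul_of_nonneg_left ((Finset.sum_ite_one_div_le_card _ _ _).trans hcard)
          (by positivity)
    _ = α / m + 1 * m / L := by field_simp

/-- Fix `m`, `α`, and non-random values `p_1, ..., p_{m−1} ∈ [0,1]`.
With `p_m` uniform on the grid `{1/L, ..., L/L}` and ties among equal p-values broken
uniformly at random, the probability that `p_m` is the boundary rejection of the
support-line procedure, namely
`(1/L) ∑_{ℓ=1}^L 1{τ̂_α = ℓ/L, R_α ≥ 1} / #{i : p_i = ℓ/L}` (the count including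
`p_m = ℓ/L` itself), is at most `α/m + C·m/L` for all large `L`. -/
theorem stmt12 (m : ℕ) (hm : 1 ≤ m) (α : ℝ) (hα : α ∈ Icc (0 : ℝ) 1)
    (pfix : ℕ → ℝ) (hpfix : ∀ i, i < m - 1 → pfix i ∈ Icc (0 : ℝ) 1) :
    ∃ C : ℝ, ∃ L0 : ℕ, 1 ≤ L0 ∧ ∀ L : ℕ, L0 ≤ L →
      (1 / (L : ℝ)) * ∑ ℓ ∈ Finset.Icc 1 L,
        (if 1 ≤ slR α (fun i : Fin m => if (i : ℕ) < m - 1 then pfix i else (ℓ : ℝ) / L)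
            ∧ slTau α (fun i : Fin m => if (i : ℕ) < m - 1 then pfix i else (ℓ : ℝ) / L)
              = (ℓ : ℝ) / L
          then 1 / (({i : Fin m |
              (if (i : ℕ) < m - 1 then pfix i else (ℓ : ℝ) / L) = (ℓ : ℝ) / L}.ncard : ℝ))
          else 0)
      ≤ α / m + C * m / L :=
  stmt12_general m hm α hα pfix
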